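/- arXiv:1702.07697 — 2 statements merged into one kernel-verified Lean document; each statement's English description precedes it below -/
import Mathlib

section
/- Let f_0, g_0 ∈ C[z] be nonzero polynomials of equal length with nonzero constant coefficients, generate f_n, g_n by the Rudin-Shapiro-like recursion f_{n+1} = f_n + σ_n z^{len f_n} f_n†(-z), g_{n+1} = g_n + σ_n z^{len g_n} g_n†(-z). Then lim_{n→∞} ‖f_n g_n‖_2^2/(‖f_n‖_2^2‖g_n‖_2^2) = [2‖f_0 g_0‖_2^2 + ‖f_0 g_0~‖_2^2 + Re ∫ f_0 f_0~ conj(g_0 g_0~)] / (3‖f_0‖_2^2‖g_0‖_2^2). -/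
noncomputable def dagger (f : Polynomial ℂ) : Polynomial ℂ :=
  ∑ j ∈ Finset.range (f.natDegree + 1),
    Polynomial.C ((starRingEnd ℂ) (f.coeff (f.natDegree - j))) * Polynomial.X ^ j

noncomputable def circ (θ : ℝ) : ℂ := Complex.exp (θ * Complex.I)

noncomputable def n2 (f : Polynomial ℂ) : ℝ :=
  (1 / (2 * Real.pi)) * ∫ θ in (0:ℝ)..(2 * Real.pi), ‖f.eval (circ θ)‖ ^ 2

noncomputable def uu (f g : Polynomial ℂ) : ℝ :=
  (1 / (2 * Real.pi)) * ∫ θ in (0:ℝ)..(2 * Real.pi), ‖f.eval (circ θ) * g.eval (circ θ)‖ ^ 2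

noncomputable def vv (f g : Polynomial ℂ) : ℝ :=
  (1 / (2 * Real.pi)) * ∫ θ in (0:ℝ)..(2 * Real.pi), ‖f.eval (circ θ) * g.eval (-(circ θ))‖ ^ 2

noncomputable def ww (f g : Polynomial ℂ) : ℝ :=
  (1 / (2 * Real.pi)) * (∫ θ in (0:ℝ)..(2 * Real.pi),
    f.eval (circ θ) * f.eval (-(circ θ)) *
      (starRingEnd ℂ) (g.eval (circ θ) * g.eval (-(circ θ)))).re

/-!
On the unit circle `dagger P` evaluates to `z ^ deg P * conj (P z)`. Writing `a, b, c, e` for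
`f_n z, f_n (-z), g_n z, g_n (-z)`, `d` for the common degree and `ω = σ_n (-1)^d z^(2d+1)`,
this gives `f_{n+1} z = a + ω b̄`, `f_{n+1} (-z) = b - ω ā`, and likewise for `g`. Adding each
integrand at `z` and at `-z` cancels every term linear in `ω`, and the `ω²` term is `z^(4d+2)`
times the conjugate of a polynomial of degree `4d`, whose circle average vanishes by the mean
value property. So `u = ‖f g‖²`, `v = ‖f g~‖²` and `w = Re ∫ f f~ conj (g g~)` obey
`(u, v, w) ↦ 2 (u + v + w, u + v - w, u - v + w)` while `‖f‖²` and `‖g‖²` double: `2u + v + w`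
grows like `4^n`, `u - v - w` like `(-2)^n`, and `u = ((2u + v + w) + (u - v - w)) / 3`.
-/

open Polynomial ComplexConjugate Real Filter Topology

noncomputable def rsStep (s : ℂ) (p : ℂ[X]) : ℂ[X] :=
  p + C s * (X ^ (p.natDegree + 1) * (dagger p).comp (-X))

lemma coeff_dagger (p : ℂ[X]) (k : ℕ) :
    (dagger p).coeff k = if k ≤ p.natDegree then conj (p.coeff (p.natDegree - k)) else 0 := by
  simp only [dagger, finsetSum_coeff, coeff_C_mul, coeff_X_pow, mul_ite, mul_one, mul_zero,
    Finset.sum_ite_eq, Finset.mem_range, Nat.lt_succ_iff]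

lemma natDegree_dagger {p : ℂ[X]} (hp : p.coeff 0 ≠ 0) : (dagger p).natDegree = p.natDegree :=
  natDegree_eq_of_le_of_coeff_ne_zero
    (natDegree_le_iff_coeff_eq_zero.mpr fun k hk => by
      rw [coeff_dagger, if_neg (not_le.mpr (by exact_mod_cast hk))])
    (by simpa [coeff_dagger] using hp)

lemma coeff_zero_rsStep (s : ℂ) (p : ℂ[X]) : (rsStep s p).coeff 0 = p.coeff 0 := by
  simp [rsStep]

lemma natDegree_rsStep {s : ℂ} (hs : s ≠ 0) {p : ℂ[X]} (hp : p.coeff 0 ≠ 0) :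
    (rsStep s p).natDegree = 2 * p.natDegree + 1 := by
  have hq : (dagger p).comp (-X) ≠ 0 := fun h => by
    have h0 : dagger p = 0 := by rw [← comp_neg_X_comp_neg_X (dagger p), h, zero_comp]
    exact hp (by simpa [coeff_dagger] using congrArg (coeff · p.natDegree) h0)
  have htail : (C s * (X ^ (p.natDegree + 1) * (dagger p).comp (-X))).natDegree =
      2 * p.natDegree + 1 := by
    rw [natDegree_C_mul hs, natDegree_X_pow_mul _ hq, natDegree_comp, natDegree_dagger hp,
      natDegree_neg, natDegree_X]
    omega
  rw [rsStep, natDegree_add_eq_right_of_natDegree_lt (by omega), htail]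

lemma natDegree_mul_comp_neg_lt {F G : ℂ[X]} (hFG : F.natDegree = G.natDegree) :
    (F * G * F.comp (-X) * G.comp (-X)).natDegree < 2 * (2 * F.natDegree + 1) := by
  have h₁ := natDegree_mul_le (p := F * G * F.comp (-X)) (q := G.comp (-X))
  have h₂ := natDegree_mul_le (p := F * G) (q := F.comp (-X))
  have h₃ := natDegree_mul_le (p := F) (q := G)
  simp only [natDegree_comp, natDegree_neg, natDegree_X, mul_one] at h₁ h₂
  omega

lemma eval_dagger_of_norm_eq_one {z : ℂ} (hz : ‖z‖ = 1) (p : ℂ[X]) :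
    (dagger p).eval z = z ^ p.natDegree * conj (p.eval z) := by
  have hzz : z * conj z = 1 := by rw [Complex.mul_conj', hz]; simp
  rw [eval_eq_sum_range (p := p), map_sum, Finset.mul_sum, dagger, eval_finsetSum,
    ← Finset.sum_range_reflect]
  refine Finset.sum_congr rfl fun k hk => ?_
  have hk : k ≤ p.natDegree := Nat.lt_succ_iff.mp (Finset.mem_range.mp hk)
  simp only [eval_C_mul, eval_X_pow, map_mul, map_pow, Nat.add_sub_cancel]
  conv_rhs => rw [← Nat.sub_add_cancel hk, pow_add]
  rw [Nat.sub_sub_self hk]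
  calc _ = conj (p.coeff k) * z ^ (p.natDegree - k) * (z * conj z) ^ k := by
        rw [hzz, one_pow, mul_one]
    _ = _ := by ring

lemma eval_rsStep {z : ℂ} (hz : ‖z‖ = 1) (s : ℂ) (p : ℂ[X]) :
    (rsStep s p).eval z =
      p.eval z + s * (-1) ^ p.natDegree * z ^ (2 * p.natDegree + 1) * conj (p.eval (-z)) := by
  rw [rsStep, eval_add, eval_C_mul, eval_mul, eval_comp, eval_X_pow, eval_neg, eval_X,
    eval_dagger_of_norm_eq_one (by rwa [norm_neg]), neg_pow]
  ring

lemma eval_rsStep_neg {z : ℂ} (hz : ‖z‖ = 1) (s : ℂ) (p : ℂ[X]) :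
    (rsStep s p).eval (-z) =
      p.eval (-z) - s * (-1) ^ p.natDegree * z ^ (2 * p.natDegree + 1) * conj (p.eval z) := by
  rw [eval_rsStep (by rwa [norm_neg]), neg_neg, (odd_two_mul_add_one _).neg_pow]
  ring

-- The left-hand sides are the integrands at `z` and `-z` after one step, with `a, b, c, e` standing
-- for `F z, F (-z), G z, G (-z)`.
lemma n2_pointwise (a b ω : ℂ) (hω : ‖ω‖ = 1) :
    ‖a + ω * conj b‖ ^ 2 + ‖b - ω * conj a‖ ^ 2 = 2 * ‖a‖ ^ 2 + 2 * ‖b‖ ^ 2 := by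
  have hω0 : ω ≠ 0 := by rintro rfl; simp at hω
  apply Complex.ofReal_injective
  push_cast
  simp only [← Complex.mul_conj', map_add, map_sub, map_mul, Complex.conj_conj,
    ← Complex.inv_eq_conj hω]
  field_simp
  ring

lemma uu_pointwise (a b c e ω : ℂ) (hω : ‖ω‖ = 1) :
    ‖(a + ω * conj b) * (c + ω * conj e)‖ ^ 2 + ‖(b - ω * conj a) * (e - ω * conj c)‖ ^ 2 =
      (2 * ‖a * c‖ ^ 2 + 2 * ‖a * e‖ ^ 2 + 2 * (a * b * conj (c * e)).re) +
      (2 * ‖b * e‖ ^ 2 + 2 * ‖b * c‖ ^ 2 + 2 * (b * a * conj (e * c)).re) +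
      (4 * ω ^ 2 * conj (a * c * b * e)).re := by
  have hω0 : ω ≠ 0 := by rintro rfl; simp at hω
  apply Complex.ofReal_injective
  push_cast
  simp only [← Complex.mul_conj', Complex.re_eq_add_conj, map_add, map_sub, map_mul, map_pow,
    map_ofNat, Complex.conj_conj, ← Complex.inv_eq_conj hω]
  field_simp
  ring

lemma vv_pointwise (a b c e ω : ℂ) (hω : ‖ω‖ = 1) :
    ‖(a + ω * conj b) * (e - ω * conj c)‖ ^ 2 + ‖(b - ω * conj a) * (c + ω * conj e)‖ ^ 2 =
      (2 * ‖a * c‖ ^ 2 + 2 * ‖a * e‖ ^ 2 - 2 * (a * b * conj (c * e)).re) +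
      (2 * ‖b * e‖ ^ 2 + 2 * ‖b * c‖ ^ 2 - 2 * (b * a * conj (e * c)).re) +
      (-4 * ω ^ 2 * conj (a * c * b * e)).re := by
  have hω0 : ω ≠ 0 := by rintro rfl; simp at hω
  apply Complex.ofReal_injective
  push_cast
  simp only [← Complex.mul_conj', Complex.re_eq_add_conj, map_add, map_sub, map_mul, map_pow,
    map_ofNat, map_neg, Complex.conj_conj, ← Complex.inv_eq_conj hω]
  field_simp
  ring

lemma ww_pointwise (a b c e ω : ℂ) (hω : ‖ω‖ = 1) :
    ((a + ω * conj b) * (b - ω * conj a) * conj ((c + ω * conj e) * (e - ω * conj c))).re +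
      ((b - ω * conj a) * (a + ω * conj b) * conj ((e - ω * conj c) * (c + ω * conj e))).re =
      (2 * ‖a * c‖ ^ 2 - 2 * ‖a * e‖ ^ 2 + 2 * (a * b * conj (c * e)).re) +
      (2 * ‖b * e‖ ^ 2 - 2 * ‖b * c‖ ^ 2 + 2 * (b * a * conj (e * c)).re) +
      (-4 * ω ^ 2 * conj (a * c * b * e)).re := by
  have hω0 : ω ≠ 0 := by rintro rfl; simp at hω
  apply Complex.ofReal_injective
  push_cast
  simp only [← Complex.mul_conj', Complex.re_eq_add_conj, map_add, map_sub, map_mul, map_pow,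
    map_ofNat, map_neg, Complex.conj_conj, ← Complex.inv_eq_conj hω, map_inv₀]
  field_simp
  ring

lemma circleAverage_comp_neg {E : Type*} [NormedAddCommGroup E] [NormedSpace ℝ E] (f : ℂ → E) :
    circleAverage (fun z => f (-z)) 0 1 = circleAverage f 0 1 := by
  rw [← circleAverage_neg_radius (R := 1)]
  simp [circleAverage_def, circleMap]

-- On the circle the integrand is the real part of the polynomial `c X^(N - deg P) (dagger P)`,
-- which vanishes at `0`.
lemma circleAverage_re_mul_pow_mul_conj_eval (c : ℂ) {P : ℂ[X]} {N : ℕ} (hN : P.natDegree < N) :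
    circleAverage (fun z => (c * z ^ N * conj (P.eval z)).re) 0 1 = 0 := by
  set Q : ℂ[X] := C c * X ^ (N - P.natDegree) * dagger P
  have hQ : Set.EqOn (fun z => (c * z ^ N * conj (P.eval z)).re) (fun z => (Q.eval z).re)
      (Metric.sphere 0 |1|) := fun z hz => by
    have hz : ‖z‖ = 1 := by simpa using hz
    simp only [Q, eval_mul, eval_C, eval_X_pow, eval_dagger_of_norm_eq_one hz]
    conv_lhs => rw [← Nat.sub_add_cancel hN.le, pow_add]
    ring_nf
  rw [circleAverage_congr_sphere hQ,
    show (fun z => (Q.eval z).re) = Complex.reCLM ∘ Q.eval from rfl,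
    Complex.reCLM.circleAverage_comp_comm (Q.continuous.continuousOn.circleIntegrable zero_le_one),
    Q.differentiable.diffContOnCl.circleAverage]
  simp [Q, Nat.sub_ne_zero_of_lt hN]

lemma circleAverage_eq_of_add_comp_neg {L E H : ℂ → ℝ} (hL : Continuous L) (hE : Continuous E)
    (hH : Continuous H) (hH0 : circleAverage H 0 1 = 0)
    (h : ∀ z, ‖z‖ = 1 → L z + L (-z) = E z + E (-z) + H z) :
    circleAverage L 0 1 = circleAverage E 0 1 := by
  have ci : ∀ {φ : ℂ → ℝ}, Continuous φ → CircleIntegrable φ 0 1 :=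
    fun hφ => hφ.continuousOn.circleIntegrable zero_le_one
  have key := circleAverage_congr_sphere (c := 0) (R := 1)
    (f₁ := fun z => L z + L (-z)) (f₂ := fun z => E z + E (-z) + H z)
    fun z hz => h z (by simpa using hz)
  rw [circleAverage_fun_add (f₂ := fun z => L (-z)) (ci hL) (ci (hL.comp continuous_neg)),
    circleAverage_comp_neg, circleAverage_fun_add (f₁ := fun z => E z + E (-z))
      (ci (hE.add (hE.comp continuous_neg))) (ci hH),
    circleAverage_fun_add (f₂ := fun z => E (-z)) (ci hE) (ci (hE.comp continuous_neg)),
    circleAverage_comp_neg, hH0] at key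
  linarith

lemma circleAverage_linear_comb {f g h : ℂ → ℝ} (hf : Continuous f) (hg : Continuous g)
    (hh : Continuous h) (α β γ : ℝ) :
    circleAverage (fun z => α * f z + β * g z + γ * h z) 0 1 =
      α * circleAverage f 0 1 + β * circleAverage g 0 1 + γ * circleAverage h 0 1 := by
  have ci : ∀ {φ : ℂ → ℝ}, Continuous φ → CircleIntegrable φ 0 1 :=
    fun hφ => hφ.continuousOn.circleIntegrable zero_le_one
  rw [circleAverage_fun_add (ci (by fun_prop)) (ci (by fun_prop)),
    circleAverage_fun_add (ci (by fun_prop)) (ci (by fun_prop))]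
  simp only [← smul_eq_mul, circleAverage_fun_smul]

lemma integral_circ_eq_circleAverage (φ : ℂ → ℝ) :
    1 / (2 * π) * ∫ θ in (0:ℝ)..2 * π, φ (circ θ) = circleAverage φ 0 1 := by
  simp [circleAverage_def, circ, circleMap]

lemma n2_eq_circleAverage (f : ℂ[X]) : n2 f = circleAverage (fun z => ‖f.eval z‖ ^ 2) 0 1 :=
  integral_circ_eq_circleAverage fun z => ‖f.eval z‖ ^ 2

lemma uu_eq_circleAverage (f g : ℂ[X]) :
    uu f g = circleAverage (fun z => ‖f.eval z * g.eval z‖ ^ 2) 0 1 :=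
  integral_circ_eq_circleAverage fun z => ‖f.eval z * g.eval z‖ ^ 2

lemma vv_eq_circleAverage (f g : ℂ[X]) :
    vv f g = circleAverage (fun z => ‖f.eval z * g.eval (-z)‖ ^ 2) 0 1 :=
  integral_circ_eq_circleAverage fun z => ‖f.eval z * g.eval (-z)‖ ^ 2

lemma ww_eq_circleAverage (f g : ℂ[X]) : ww f g =
    circleAverage (fun z => (f.eval z * f.eval (-z) * conj (g.eval z * g.eval (-z))).re) 0 1 := by
  rw [show (fun z => (f.eval z * f.eval (-z) * conj (g.eval z * g.eval (-z))).re) =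
      Complex.reCLM ∘ fun z => f.eval z * f.eval (-z) * conj (g.eval z * g.eval (-z)) from rfl,
    Complex.reCLM.circleAverage_comp_comm
      (Continuous.continuousOn (by fun_prop) |>.circleIntegrable zero_le_one)]
  simp [ww, circleAverage_def, circ, circleMap]

theorem n2_rsStep {s : ℂ} (hs : ‖s‖ = 1) (F : ℂ[X]) : n2 (rsStep s F) = 2 * n2 F := by
  rw [n2_eq_circleAverage, n2_eq_circleAverage, ← smul_eq_mul, ← circleAverage_smul]
  refine circleAverage_eq_of_add_comp_neg (by fun_prop) (by fun_prop) continuous_const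
    (circleAverage_const 0 0 1) fun z hz => ?_
  simp only [eval_rsStep hz, eval_rsStep_neg hz, Pi.smul_apply, smul_eq_mul, add_zero]
  exact n2_pointwise _ _ _ (by simp [hs, hz])

theorem uu_rsStep {s : ℂ} (hs : ‖s‖ = 1) {F G : ℂ[X]} (hFG : F.natDegree = G.natDegree) :
    uu (rsStep s F) (rsStep s G) = 2 * uu F G + 2 * vv F G + 2 * ww F G := by
  rw [uu_eq_circleAverage, uu_eq_circleAverage, vv_eq_circleAverage, ww_eq_circleAverage,
    ← circleAverage_linear_comb (by fun_prop) (by fun_prop) (by fun_prop)]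
  refine circleAverage_eq_of_add_comp_neg (by fun_prop) (by fun_prop)
    (H := fun z => (4 * (s * (-1) ^ F.natDegree) ^ 2 * z ^ (2 * (2 * F.natDegree + 1)) *
      conj ((F * G * F.comp (-X) * G.comp (-X)).eval z)).re) (by fun_prop)
    (circleAverage_re_mul_pow_mul_conj_eval _ (natDegree_mul_comp_neg_lt hFG)) fun z hz => ?_
  simp only [eval_rsStep hz, eval_rsStep_neg hz, ← hFG, neg_neg]
  rw [uu_pointwise _ _ _ _ _ (by simp [hs, hz])]
  simp only [eval_mul, eval_comp, eval_neg, eval_X]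
  ring_nf

theorem vv_rsStep {s : ℂ} (hs : ‖s‖ = 1) {F G : ℂ[X]} (hFG : F.natDegree = G.natDegree) :
    vv (rsStep s F) (rsStep s G) = 2 * uu F G + 2 * vv F G - 2 * ww F G := by
  rw [vv_eq_circleAverage, uu_eq_circleAverage, vv_eq_circleAverage, ww_eq_circleAverage,
    sub_eq_add_neg, neg_mul_eq_neg_mul,
    ← circleAverage_linear_comb (by fun_prop) (by fun_prop) (by fun_prop)]
  refine circleAverage_eq_of_add_comp_neg (by fun_prop) (by fun_prop)
    (H := fun z => (-4 * (s * (-1) ^ F.natDegree) ^ 2 * z ^ (2 * (2 * F.natDegree + 1)) *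
      conj ((F * G * F.comp (-X) * G.comp (-X)).eval z)).re) (by fun_prop)
    (circleAverage_re_mul_pow_mul_conj_eval _ (natDegree_mul_comp_neg_lt hFG)) fun z hz => ?_
  simp only [eval_rsStep hz, eval_rsStep_neg hz, ← hFG, neg_neg]
  rw [vv_pointwise _ _ _ _ _ (by simp [hs, hz])]
  simp only [eval_mul, eval_comp, eval_neg, eval_X]
  ring_nf

theorem ww_rsStep {s : ℂ} (hs : ‖s‖ = 1) {F G : ℂ[X]} (hFG : F.natDegree = G.natDegree) :
    ww (rsStep s F) (rsStep s G) = 2 * uu F G - 2 * vv F G + 2 * ww F G := by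
  rw [ww_eq_circleAverage, uu_eq_circleAverage, vv_eq_circleAverage, ww_eq_circleAverage,
    sub_eq_add_neg, neg_mul_eq_neg_mul,
    ← circleAverage_linear_comb (by fun_prop) (by fun_prop) (by fun_prop)]
  refine circleAverage_eq_of_add_comp_neg (by fun_prop) (by fun_prop)
    (H := fun z => (-4 * (s * (-1) ^ F.natDegree) ^ 2 * z ^ (2 * (2 * F.natDegree + 1)) *
      conj ((F * G * F.comp (-X) * G.comp (-X)).eval z)).re) (by fun_prop)
    (circleAverage_re_mul_pow_mul_conj_eval _ (natDegree_mul_comp_neg_lt hFG)) fun z hz => ?_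
  simp only [eval_rsStep hz, eval_rsStep_neg hz, ← hFG, neg_neg]
  rw [ww_pointwise _ _ _ _ _ (by simp [hs, hz])]
  simp only [eval_mul, eval_comp, eval_neg, eval_X]
  ring_nf

lemma tendsto_div_of_recurrence {u v w a b : ℕ → ℝ} (ha : ∀ n, a (n + 1) = 2 * a n)
    (hb : ∀ n, b (n + 1) = 2 * b n) (hu : ∀ n, u (n + 1) = 2 * u n + 2 * v n + 2 * w n)
    (hv : ∀ n, v (n + 1) = 2 * u n + 2 * v n - 2 * w n)
    (hw : ∀ n, w (n + 1) = 2 * u n - 2 * v n + 2 * w n) :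
    Tendsto (fun n => u n / (a n * b n)) atTop
      (𝓝 ((2 * u 0 + v 0 + w 0) / (3 * a 0 * b 0))) := by
  have hdom : ∀ n, 2 * u n + v n + w n = 4 ^ n * (2 * u 0 + v 0 + w 0) := fun n => by
    induction n with
    | zero => simp
    | succ n ih => rw [hu, hv, hw, pow_succ]; linear_combination 4 * ih
  have hosc : ∀ n, u n - v n - w n = (-2) ^ n * (u 0 - v 0 - w 0) := fun n => by
    induction n with
    | zero => simp
    | succ n ih => rw [hu, hv, hw, pow_succ]; linear_combination -2 * ih
  have hab : ∀ n, a n * b n = 4 ^ n * (a 0 * b 0) := fun n => by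
    induction n with
    | zero => simp
    | succ n ih => rw [ha, hb, pow_succ]; linear_combination 4 * ih
  have hclosed : ∀ n, u n / (a n * b n) =
      (2 * u 0 + v 0 + w 0 + (-1 / 2) ^ n * (u 0 - v 0 - w 0)) / (3 * a 0 * b 0) := fun n => by
    have hpow : (-1 / 2 : ℝ) ^ n * 4 ^ n = (-2) ^ n := by rw [← mul_pow]; norm_num
    calc u n / (a n * b n) = u n / 4 ^ n / (a 0 * b 0) := by rw [hab, div_div]
      _ = (2 * u 0 + v 0 + w 0 + (-1 / 2) ^ n * (u 0 - v 0 - w 0)) / 3 / (a 0 * b 0) := by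
        congr 1
        rw [div_eq_iff (by positivity : (4 : ℝ) ^ n ≠ 0)]
        linear_combination (hdom n + hosc n) / 3 - (u 0 - v 0 - w 0) / 3 * hpow
      _ = _ := by rw [div_div, mul_assoc]
  simp_rw [hclosed]
  refine Tendsto.div_const ?_ _
  simpa using tendsto_const_nhds.add ((tendsto_pow_atTop_nhds_zero_of_abs_lt_one
    (by norm_num : |(-1 / 2 : ℝ)| < 1)).mul_const (u 0 - v 0 - w 0))

lemma natDegree_eq_of_rsStep {f g : ℕ → ℂ[X]} {σ : ℕ → ℂ} (hσ : ∀ n, σ n ≠ 0)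
    (hf : ∀ n, f (n + 1) = rsStep (σ n) (f n)) (hg : ∀ n, g (n + 1) = rsStep (σ n) (g n))
    (hf0 : (f 0).coeff 0 ≠ 0) (hg0 : (g 0).coeff 0 ≠ 0)
    (hlen : (f 0).natDegree = (g 0).natDegree) (n : ℕ) :
    (f n).natDegree = (g n).natDegree := by
  have hcoeff : ∀ {h : ℕ → ℂ[X]}, (∀ n, h (n + 1) = rsStep (σ n) (h n)) →
      ∀ n, (h n).coeff 0 = (h 0).coeff 0 := fun hh n => by
    induction n with
    | zero => rfl
    | succ n ih => rw [hh, coeff_zero_rsStep, ih]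
  induction n with
  | zero => exact hlen
  | succ n ih =>
    rw [hf, hg, natDegree_rsStep (hσ n) (hcoeff hf n ▸ hf0),
      natDegree_rsStep (hσ n) (hcoeff hg n ▸ hg0), ih]

theorem cdf_limit_formula_general (f g : ℕ → Polynomial ℂ) (σ : ℕ → ℝ)
    (hσ : ∀ n, σ n = 1 ∨ σ n = -1)
    (hf0 : (f 0).coeff 0 ≠ 0) (hg0 : (g 0).coeff 0 ≠ 0)
    (hlen : (f 0).natDegree = (g 0).natDegree)
    (hf : ∀ n, f (n + 1) = f n + Polynomial.C (σ n : ℂ) *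
      (Polynomial.X ^ ((f n).natDegree + 1) * (dagger (f n)).comp (-Polynomial.X)))
    (hg : ∀ n, g (n + 1) = g n + Polynomial.C (σ n : ℂ) *
      (Polynomial.X ^ ((g n).natDegree + 1) * (dagger (g n)).comp (-Polynomial.X))) :
    Filter.Tendsto (fun n => uu (f n) (g n) / (n2 (f n) * n2 (g n))) Filter.atTop
      (nhds ((2 * uu (f 0) (g 0) + vv (f 0) (g 0) + ww (f 0) (g 0)) /
        (3 * n2 (f 0) * n2 (g 0)))) := by
  have hs : ∀ n, ‖(σ n : ℂ)‖ = 1 := fun n => by rcases hσ n with h | h <;> simp [h]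
  have hf' : ∀ n, f (n + 1) = rsStep (σ n) (f n) := hf
  have hg' : ∀ n, g (n + 1) = rsStep (σ n) (g n) := hg
  have hdeg := natDegree_eq_of_rsStep (fun n => norm_ne_zero_iff.mp (hs n ▸ one_ne_zero))
    hf' hg' hf0 hg0 hlen
  apply tendsto_div_of_recurrence (v := fun n => vv (f n) (g n)) (w := fun n => ww (f n) (g n))
  all_goals intro n
  · rw [hf', n2_rsStep (hs n)]
  · rw [hg', n2_rsStep (hs n)]
  · rw [hf', hg', uu_rsStep (hs n) (hdeg n)]
  · rw [hf', hg', vv_rsStep (hs n) (hdeg n)]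
  · rw [hf', hg', ww_rsStep (hs n) (hdeg n)]

/-- Limiting crosscorrelation demerit factor of a pair of stems of
Rudin-Shapiro-like polynomials. -/
theorem cdf_limit_formula (f g : ℕ → Polynomial ℂ) (σ : ℕ → ℝ)
    (hσ : ∀ n, σ n = 1 ∨ σ n = -1)
    (hne_f : f 0 ≠ 0) (hne_g : g 0 ≠ 0)
    (hf0 : (f 0).coeff 0 ≠ 0) (hg0 : (g 0).coeff 0 ≠ 0)
    (hlen : (f 0).natDegree = (g 0).natDegree)
    (hf : ∀ n, f (n + 1) = f n + Polynomial.C (σ n : ℂ) *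
      (Polynomial.X ^ ((f n).natDegree + 1) * (dagger (f n)).comp (-Polynomial.X)))
    (hg : ∀ n, g (n + 1) = g n + Polynomial.C (σ n : ℂ) *
      (Polynomial.X ^ ((g n).natDegree + 1) * (dagger (g n)).comp (-Polynomial.X))) :
    Filter.Tendsto (fun n => uu (f n) (g n) / (n2 (f n) * n2 (g n))) Filter.atTop
      (nhds ((2 * uu (f 0) (g 0) + vv (f 0) (g 0) + ww (f 0) (g 0)) /
        (3 * n2 (f 0) * n2 (g 0)))) :=
  cdf_limit_formula_general f g σ hσ hf0 hg0 hlen hf hg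
end

section
/- For any nonzero polynomial f(z) ∈ C[z], ‖f‖_4^4 + ‖f·f~‖_2^2 ≥ 2‖f‖_2^4, where f~(z) = f(-z) and ‖·‖_p denotes the L^p norm on the complex unit circle. -/
open MeasureTheory

lemma continuous_circ : Continuous circ := by
  unfold circ
  fun_prop

lemma circ_add_pi (θ : ℝ) : circ (θ + Real.pi) = -circ θ := by
  simp only [circ, Complex.ofReal_add, add_mul, Complex.exp_add, Complex.exp_pi_mul_I, mul_neg_one]

lemma circ_periodic : Function.Periodic circ (2 * Real.pi) := by
  intro θ
  simp only [circ, Complex.ofReal_add, add_mul, Complex.exp_add, Complex.ofReal_mul,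
    Complex.ofReal_ofNat, Complex.exp_two_pi_mul_I, mul_one]

lemma sq_intervalIntegral_le_mul_intervalIntegral_sq {h : ℝ → ℝ} {a b : ℝ} (hab : a ≤ b)
    (hh : IntervalIntegrable h volume a b) (hh2 : IntervalIntegrable (fun x => h x ^ 2) volume a b) :
    (∫ x in a..b, h x) ^ 2 ≤ (b - a) * ∫ x in a..b, h x ^ 2 := by
  set L := b - a
  set S := ∫ x in a..b, h x
  set Q := ∫ x in a..b, h x ^ 2
  rcases hab.eq_or_lt with rfl | hlt
  · simp [S, L]
  have hL : 0 < L := sub_pos.mpr hlt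
  have hdev : 0 ≤ ∫ x in a..b, (L * h x - S) ^ 2 :=
    intervalIntegral.integral_nonneg hab fun _ _ => sq_nonneg _
  have hexpand : (∫ x in a..b, (L * h x - S) ^ 2) = L * (L * Q - S ^ 2) := by
    have hpoint : ∀ x, (L * h x - S) ^ 2 = L ^ 2 * h x ^ 2 - 2 * L * S * h x + S ^ 2 :=
      fun x => by ring
    simp only [hpoint]
    rw [intervalIntegral.integral_add ((hh2.const_mul _).sub (hh.const_mul _))
        intervalIntegrable_const,
      intervalIntegral.integral_sub (hh2.const_mul _) (hh.const_mul _),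
      intervalIntegral.integral_const_mul, intervalIntegral.integral_const_mul,
      intervalIntegral.integral_const, smul_eq_mul]
    ring
  rw [hexpand] at hdev
  nlinarith [(mul_nonneg_iff_of_pos_left hL).mp hdev]

lemma Function.Periodic.intervalIntegral_comp_add {u : ℝ → ℝ} {T : ℝ} (hu : u.Periodic T)
    (s : ℝ) : ∫ x in (0 : ℝ)..T, u (x + s) = ∫ x in (0 : ℝ)..T, u x := by
  simpa [intervalIntegral.integral_comp_add_right, add_comm T s] using hu.intervalIntegral_add_eq s 0

lemma sq_intervalIntegral_le_of_periodic {g : ℝ → ℝ} {T : ℝ} (hT : 0 ≤ T) (hg : Continuous g)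
    (hgT : g.Periodic T) (s : ℝ) :
    2 * (∫ x in (0 : ℝ)..T, g x) ^ 2
      ≤ T * ((∫ x in (0 : ℝ)..T, g x ^ 2) + ∫ x in (0 : ℝ)..T, g x * g (x + s)) := by
  have hint : ∀ u : ℝ → ℝ, Continuous u → IntervalIntegrable u volume 0 T :=
    fun u hu => hu.intervalIntegrable 0 T
  have hsum : ∫ x in (0 : ℝ)..T, (g x + g (x + s)) = 2 * ∫ x in (0 : ℝ)..T, g x := by
    rw [intervalIntegral.integral_add (hint _ hg) (hint _ (by fun_prop)),
      hgT.intervalIntegral_comp_add s]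
    ring
  have hsq : ∫ x in (0 : ℝ)..T, (g x + g (x + s)) ^ 2
      = 2 * ((∫ x in (0 : ℝ)..T, g x ^ 2) + ∫ x in (0 : ℝ)..T, g x * g (x + s)) := by
    have hpoint : ∀ x, (g x + g (x + s)) ^ 2
        = g x ^ 2 + (2 * (g x * g (x + s)) + g (x + s) ^ 2) := fun x => by ring
    have hshift : ∫ x in (0 : ℝ)..T, g (x + s) ^ 2 = ∫ x in (0 : ℝ)..T, g x ^ 2 :=
      (hgT.comp fun y => y ^ 2).intervalIntegral_comp_add s
    simp only [hpoint]
    rw [intervalIntegral.integral_add (hint _ (by fun_prop)) (hint _ (by fun_prop)),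
      intervalIntegral.integral_add (hint _ (by fun_prop)) (hint _ (by fun_prop)),
      intervalIntegral.integral_const_mul, hshift]
    ring
  have hcs : (∫ x in (0 : ℝ)..T, (g x + g (x + s))) ^ 2
      ≤ (T - 0) * ∫ x in (0 : ℝ)..T, (g x + g (x + s)) ^ 2 :=
    sq_intervalIntegral_le_mul_intervalIntegral_sq hT (hint _ (by fun_prop))
      (hint _ (by fun_prop))
  rw [hsum, hsq, sub_zero] at hcs
  linarith

theorem norm_four_plus_prod_lower_bound_general (f : Polynomial ℂ) :
    2 * ((1 / (2 * Real.pi)) * ∫ θ in (0:ℝ)..(2 * Real.pi), ‖f.eval (circ θ)‖ ^ 2) ^ 2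
      ≤ ((1 / (2 * Real.pi)) * ∫ θ in (0:ℝ)..(2 * Real.pi), ‖f.eval (circ θ)‖ ^ 4)
        + ((1 / (2 * Real.pi)) * ∫ θ in (0:ℝ)..(2 * Real.pi),
            ‖f.eval (circ θ) * f.eval (-(circ θ))‖ ^ 2) := by
  set g : ℝ → ℝ := fun θ => ‖f.eval (circ θ)‖ ^ 2
  have hg : Continuous g := (f.continuous.comp continuous_circ).norm.pow 2
  have hgT : g.Periodic (2 * Real.pi) := fun θ => by simp only [g, circ_periodic θ]
  have hfourth : ∀ θ, ‖f.eval (circ θ)‖ ^ 4 = g θ ^ 2 := fun θ => by simp only [g]; ring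
  have hprod : ∀ θ, ‖f.eval (circ θ) * f.eval (-(circ θ))‖ ^ 2 = g θ * g (θ + Real.pi) :=
    fun θ => by simp only [g, circ_add_pi, norm_mul]; ring
  simp only [hfourth, hprod]
  have hT : 0 < 2 * Real.pi := Real.two_pi_pos
  have key := sq_intervalIntegral_le_of_periodic hT.le hg hgT Real.pi
  set A := ∫ θ in (0:ℝ)..(2 * Real.pi), g θ
  set B := ∫ θ in (0:ℝ)..(2 * Real.pi), g θ ^ 2
  set C := ∫ θ in (0:ℝ)..(2 * Real.pi), g θ * g (θ + Real.pi)
  calc 2 * (1 / (2 * Real.pi) * A) ^ 2 = 2 * A ^ 2 / (2 * Real.pi) / (2 * Real.pi) := by ring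
    _ ≤ 2 * Real.pi * (B + C) / (2 * Real.pi) / (2 * Real.pi) := by gcongr
    _ = 1 / (2 * Real.pi) * B + 1 / (2 * Real.pi) * C := by field_simp

/-- For nonzero f, ‖f‖₄⁴ + ‖f·f~‖₂² ≥ 2‖f‖₂⁴ on the complex unit circle. -/
theorem norm_four_plus_prod_lower_bound (f : Polynomial ℂ) (hf : f ≠ 0) :
    2 * ((1 / (2 * Real.pi)) * ∫ θ in (0:ℝ)..(2 * Real.pi), ‖f.eval (circ θ)‖ ^ 2) ^ 2
      ≤ ((1 / (2 * Real.pi)) * ∫ θ in (0:ℝ)..(2 * Real.pi), ‖f.eval (circ θ)‖ ^ 4)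
        + ((1 / (2 * Real.pi)) * ∫ θ in (0:ℝ)..(2 * Real.pi),
            ‖f.eval (circ θ) * f.eval (-(circ θ))‖ ^ 2) :=
  norm_four_plus_prod_lower_bound_general f
end
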